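/- For the exponential-product kernel k(x,y) = exp(xy/σ²) on a bounded interval 𝒳 ⊂ ℝ, if two compactly supported probability measures μ and ν satisfy MMD(μ, ν; k) = 0, then all moments of μ and ν coincide: E_μ[Xⁿ] = E_ν[Xⁿ] for every n ≥ 0, and hence μ = ν. In particular, MMD²(μ, ν; k) = ∑_{n=0}^∞ (E_μ[Xⁿ] − E_ν[Xⁿ])² / (σ^{2n} n!). -/

import Mathlib

/-!
Expanding `exp (x y / σ²) = ∑ₙ xⁿ yⁿ / (σ²ⁿ n!)` and integrating termwise (the series converges
absolutely and uniformly on `[-R, R]²`, where both measures live) turns each double integral in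
`MMD²` into `∑ₙ mₙ(μ) mₙ(ν) / (σ²ⁿ n!)`, with `mₙ` the `n`-th moment. Hence `MMD²` is the sum of the
nonnegative terms `(mₙ(μ) - mₙ(ν))² / (σ²ⁿ n!)`, and if it vanishes all moments agree. Then the
integrals of all polynomials agree, hence, by Weierstrass approximation on `[-R, R]`, those of all
continuous functions, and these determine a finite Borel measure on `ℝ`.
-/

open MeasureTheory

/-- The squared maximum mean discrepancy between two probability measures on `ℝ` with respect
to a kernel `k`: `MMD²(μ, ν; k) = ∬k dμ⊗dμ + ∬k dν⊗dν − 2∬k dμ⊗dν`. -/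
noncomputable def mmdSq (k : ℝ → ℝ → ℝ) (μ ν : Measure ℝ) : ℝ :=
  (∫ x, ∫ x', k x x' ∂μ ∂μ) + (∫ y, ∫ y', k y y' ∂ν ∂ν) - 2 * ∫ x, ∫ y, k x y ∂ν ∂μ

/-- The exponential-product kernel `k(x,y) = exp(xy/σ²)`. -/
noncomputable def expProdKernel (σ : ℝ) : ℝ → ℝ → ℝ :=
  fun x y => Real.exp (x * y / σ ^ 2)

open Set Polynomial

theorem Continuous.integrable_of_measure_compl_null {X E : Type*} [TopologicalSpace X]
    [T2Space X] [MeasurableSpace X] [OpensMeasurableSpace X] [NormedAddCommGroup E]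
    {μ : Measure X} [IsFiniteMeasure μ] {K : Set X} (hK : IsCompact K) (hμ : μ Kᶜ = 0)
    {f : X → E} (hf : Continuous f) : Integrable f μ :=
  Measure.restrict_eq_self_of_ae_mem (mem_ae_iff.2 hμ) ▸ hf.continuousOn.integrableOn_compact hK

theorem Real.hasSum_exp_mul_div_sq (σ x y : ℝ) :
    HasSum (fun n => x ^ n / (σ ^ (2 * n) * n.factorial) * y ^ n) (Real.exp (x * y / σ ^ 2)) := by
  have h := NormedSpace.expSeries_div_hasSum_exp (x * y / σ ^ 2)
  rw [← Real.exp_eq_exp_ℝ] at h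
  have hterm : (fun n : ℕ => x ^ n / (σ ^ (2 * n) * n.factorial) * y ^ n)
      = fun n => (x * y / σ ^ 2) ^ n / n.factorial := by
    funext n
    rw [div_pow, mul_pow, ← pow_mul]
    ring
  rw [hterm]
  exact h

theorem summable_abs_mul_div_of_abs_le_pow (σ : ℝ) {u v : ℕ → ℝ} {A B : ℝ}
    (hu : ∀ n, |u n| ≤ A ^ n) (hv : ∀ n, |v n| ≤ B ^ n) :
    Summable fun n => |u n * v n / (σ ^ (2 * n) * n.factorial)| := by
  refine (Real.summable_pow_div_factorial (A * B / σ ^ 2)).of_nonneg_of_le (fun _ => abs_nonneg _)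
    fun n => ?_
  have hd : 0 ≤ σ ^ (2 * n) * n.factorial :=
    mul_nonneg ((even_two_mul n).pow_nonneg σ) n.factorial.cast_nonneg
  rw [div_pow, mul_pow, ← pow_mul, div_div, abs_div, abs_mul, abs_of_nonneg hd]
  gcongr
  · exact (abs_nonneg _).trans (hu n)
  · exact hu n
  · exact hv n

section Moments

variable {μ ν : Measure ℝ} {R : ℝ}

theorem abs_integral_pow_le [IsProbabilityMeasure μ]
    (hμ : μ (Icc (-R) R)ᶜ = 0) (n : ℕ) : |∫ x, x ^ n ∂μ| ≤ R ^ n := by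
  have hbound : ∀ᵐ x ∂μ, ‖x ^ n‖ ≤ R ^ n := by
    filter_upwards [mem_ae_iff.2 hμ] with x hx
    rw [norm_pow]
    exact pow_le_pow_left₀ (norm_nonneg x) (abs_le.2 hx) n
  simpa using norm_integral_le_of_norm_le_const hbound

theorem hasSum_mul_integral_pow [IsFiniteMeasure μ]
    (hμ : μ (Icc (-R) R)ᶜ = 0) {a : ℕ → ℝ} (ha : Summable fun n => |a n * R ^ n|) :
    HasSum (fun n => a n * ∫ x, x ^ n ∂μ) (∫ x, ∑' n, a n * x ^ n ∂μ) := by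
  have hint : ∀ n, Integrable (fun x : ℝ => a n * x ^ n) μ := fun n =>
    (continuous_const.mul (continuous_pow n)).integrable_of_measure_compl_null isCompact_Icc hμ
  have hbound : ∀ n, ∫ x, ‖a n * x ^ n‖ ∂μ ≤ |a n * R ^ n| * μ.real univ := by
    intro n
    refine (Real.le_norm_self _).trans (norm_integral_le_of_norm_le_const ?_)
    filter_upwards [mem_ae_iff.2 hμ] with x hx
    rw [norm_norm, norm_mul, norm_pow, Real.norm_eq_abs, Real.norm_eq_abs, abs_mul, abs_pow]
    exact mul_le_mul_of_nonneg_left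
      (pow_le_pow_left₀ (abs_nonneg x) ((abs_le.2 hx).trans (le_abs_self R)) n) (abs_nonneg _)
  have hsum : Summable fun n => ∫ x, ‖a n * x ^ n‖ ∂μ :=
    (ha.mul_right _).of_nonneg_of_le (fun _ => integral_nonneg fun _ => norm_nonneg _) hbound
  simpa only [integral_const_mul] using hasSum_integral_of_summable_integral_norm hint hsum

theorem hasSum_integral_integral_exp_mul_div_sq (σ : ℝ) [IsProbabilityMeasure μ] [IsProbabilityMeasure ν]
    (hμ : μ (Icc (-R) R)ᶜ = 0) (hν : ν (Icc (-R) R)ᶜ = 0) :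
    HasSum (fun n => (∫ x, x ^ n ∂μ) * (∫ y, y ^ n ∂ν) / (σ ^ (2 * n) * n.factorial))
      (∫ x, ∫ y, Real.exp (x * y / σ ^ 2) ∂ν ∂μ) := by
  have hexp : ∀ x y, Real.exp (x * y / σ ^ 2)
      = ∑' n, x ^ n / (σ ^ (2 * n) * n.factorial) * y ^ n :=
    fun x y => (Real.hasSum_exp_mul_div_sq σ x y).tsum_eq.symm
  have hpow (n : ℕ) : |R ^ n| ≤ |R| ^ n := (abs_pow R n).le
  have hinner (x : ℝ) : ∫ y, Real.exp (x * y / σ ^ 2) ∂ν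
      = ∑' n, (∫ y, y ^ n ∂ν) / (σ ^ (2 * n) * n.factorial) * x ^ n := by
    have hsum : Summable fun n => |x ^ n / (σ ^ (2 * n) * n.factorial) * R ^ n| := by
      simpa only [div_mul_eq_mul_div] using
        summable_abs_mul_div_of_abs_le_pow σ (fun n => (abs_pow x n).le) hpow
    simp_rw [hexp]
    exact (hasSum_mul_integral_pow hν hsum).tsum_eq.symm.trans (tsum_congr fun n => by ring)
  have hsum : Summable fun n => |(∫ y, y ^ n ∂ν) / (σ ^ (2 * n) * n.factorial) * R ^ n| := by
    simpa only [div_mul_eq_mul_div] using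
      summable_abs_mul_div_of_abs_le_pow σ (abs_integral_pow_le hν) hpow
  simp_rw [hinner]
  convert hasSum_mul_integral_pow hμ hsum using 1
  funext n
  ring

theorem hasSum_mmdSq_expProdKernel (σ : ℝ) [IsProbabilityMeasure μ] [IsProbabilityMeasure ν]
    (hμ : μ (Icc (-R) R)ᶜ = 0) (hν : ν (Icc (-R) R)ᶜ = 0) :
    HasSum (fun n => ((∫ x, x ^ n ∂μ) - ∫ x, x ^ n ∂ν) ^ 2 / (σ ^ (2 * n) * n.factorial))
      (mmdSq (expProdKernel σ) μ ν) := by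
  have hμμ := hasSum_integral_integral_exp_mul_div_sq σ hμ hμ
  have hνν := hasSum_integral_integral_exp_mul_div_sq σ hν hν
  have hμν := hasSum_integral_integral_exp_mul_div_sq σ hμ hν
  have hterm : (fun n => ((∫ x, x ^ n ∂μ) - ∫ x, x ^ n ∂ν) ^ 2 / (σ ^ (2 * n) * n.factorial))
      = fun n => (∫ x, x ^ n ∂μ) * (∫ y, y ^ n ∂μ) / (σ ^ (2 * n) * n.factorial)
        + (∫ x, x ^ n ∂ν) * (∫ y, y ^ n ∂ν) / (σ ^ (2 * n) * n.factorial)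
        - 2 * ((∫ x, x ^ n ∂μ) * (∫ y, y ^ n ∂ν) / (σ ^ (2 * n) * n.factorial)) := by
    funext n
    ring
  rw [hterm]
  exact (hμμ.add hνν).sub (hμν.mul_left 2)

theorem integral_eval_eq_of_moments_eq [IsFiniteMeasure μ] [IsFiniteMeasure ν]
    (hμ : μ (Icc (-R) R)ᶜ = 0) (hν : ν (Icc (-R) R)ᶜ = 0)
    (h : ∀ n : ℕ, ∫ x, x ^ n ∂μ = ∫ x, x ^ n ∂ν) (p : ℝ[X]) :
    ∫ x, p.eval x ∂μ = ∫ x, p.eval x ∂ν := by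
  induction p using Polynomial.induction_on' with
  | add p q hp hq =>
    have hint {τ : Measure ℝ} [IsFiniteMeasure τ] (hτ : τ (Icc (-R) R)ᶜ = 0) (r : ℝ[X]) :
        Integrable (fun x => r.eval x) τ :=
      r.continuous.integrable_of_measure_compl_null isCompact_Icc hτ
    simp only [Polynomial.eval_add]
    rw [integral_add (hint hμ p) (hint hμ q), integral_add (hint hν p) (hint hν q), hp, hq]
  | monomial n c => simp only [Polynomial.eval_monomial, integral_const_mul, h n]

theorem integral_eq_of_moments_eq [IsProbabilityMeasure μ] [IsProbabilityMeasure ν]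
    (hμ : μ (Icc (-R) R)ᶜ = 0) (hν : ν (Icc (-R) R)ᶜ = 0)
    (h : ∀ n : ℕ, ∫ x, x ^ n ∂μ = ∫ x, x ^ n ∂ν) {f : ℝ → ℝ} (hf : Continuous f) :
    ∫ x, f x ∂μ = ∫ x, f x ∂ν := by
  refine eq_of_forall_dist_le fun ε hε => ?_
  obtain ⟨p, hp⟩ :=
    exists_polynomial_near_of_continuousOn (-R) R f hf.continuousOn (ε / 2) (half_pos hε)
  have hclose {τ : Measure ℝ} [IsProbabilityMeasure τ] (hτ : τ (Icc (-R) R)ᶜ = 0) :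
      dist (∫ x, f x ∂τ) (∫ x, p.eval x ∂τ) ≤ ε / 2 := by
    rw [dist_eq_norm, ← integral_sub (hf.integrable_of_measure_compl_null isCompact_Icc hτ)
      (p.continuous.integrable_of_measure_compl_null isCompact_Icc hτ)]
    refine (norm_integral_le_of_norm_le_const (C := ε / 2) ?_).trans_eq (by simp)
    filter_upwards [mem_ae_iff.2 hτ] with x hx
    rw [Real.norm_eq_abs, abs_sub_comm]
    exact (hp x hx).le
  calc dist (∫ x, f x ∂μ) (∫ x, f x ∂ν)
      ≤ dist (∫ x, f x ∂μ) (∫ x, p.eval x ∂μ) + dist (∫ x, p.eval x ∂μ) (∫ x, f x ∂ν) :=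
        dist_triangle _ _ _
    _ = dist (∫ x, f x ∂μ) (∫ x, p.eval x ∂μ) + dist (∫ x, f x ∂ν) (∫ x, p.eval x ∂ν) := by
        rw [integral_eval_eq_of_moments_eq hμ hν h p, dist_comm (∫ x, f x ∂ν)]
    _ ≤ ε / 2 + ε / 2 := add_le_add (hclose hμ) (hclose hν)
    _ = ε := add_halves ε

theorem ext_of_moments_eq [IsProbabilityMeasure μ] [IsProbabilityMeasure ν]
    (hμ : μ (Icc (-R) R)ᶜ = 0) (hν : ν (Icc (-R) R)ᶜ = 0)
    (h : ∀ n : ℕ, ∫ x, x ^ n ∂μ = ∫ x, x ^ n ∂ν) : μ = ν :=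
  ext_of_forall_integral_eq_of_IsFiniteMeasure fun f =>
    integral_eq_of_moments_eq hμ hν h f.continuous

end Moments

/-- For the exponential-product kernel `k(x,y) = exp(xy/σ²)` on a bounded
domain `𝒳 ⊂ ℝ`, we have
`MMD²(μ, ν; k) = ∑_{n=0}^∞ (E_μ[Xⁿ] − E_ν[Xⁿ])² / (σ^{2n} n!)`;
in particular, if two compactly supported probability measures `μ` and `ν` satisfy
`MMD(μ, ν; k) = 0`, then all moments of `μ` and `ν` coincide
(`E_μ[Xⁿ] = E_ν[Xⁿ]` for every `n ≥ 0`) and hence `μ = ν`. -/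
theorem stmt_13 (σ : ℝ) (hσ : 0 < σ) (R : ℝ)
    (μ ν : Measure ℝ) [IsProbabilityMeasure μ] [IsProbabilityMeasure ν]
    (hμsupp : μ (Set.Icc (-R) R)ᶜ = 0) (hνsupp : ν (Set.Icc (-R) R)ᶜ = 0) :
    mmdSq (expProdKernel σ) μ ν
        = ∑' n : ℕ, ((∫ x, x ^ n ∂μ) - ∫ x, x ^ n ∂ν) ^ 2 / (σ ^ (2 * n) * n.factorial) ∧
      (mmdSq (expProdKernel σ) μ ν = 0 →
        (∀ n : ℕ, (∫ x, x ^ n ∂μ) = ∫ x, x ^ n ∂ν) ∧ μ = ν) := by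
  have hmmd := hasSum_mmdSq_expProdKernel σ hμsupp hνsupp
  refine ⟨hmmd.tsum_eq.symm, fun hzero => ?_⟩
  rw [hzero, hasSum_zero_iff_of_nonneg fun n => by positivity] at hmmd
  have hmoments (n : ℕ) : ∫ x, x ^ n ∂μ = ∫ x, x ^ n ∂ν := by
    have hd : σ ^ (2 * n) * (n.factorial : ℝ) ≠ 0 := by positivity
    simpa [hd, sub_eq_zero] using congr_fun hmmd n
  exact ⟨hmoments, ext_of_moments_eq hμsupp hνsupp hmoments⟩
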